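/- Let σ > 0 and δ > 0, set r = δ/σ, and let p_z be the standardized two-component Gaussian mixture density p_z(v) = (N(v;−δ̂,σ̂) + N(v;δ̂,σ̂))/2 with δ̂ = δ/√(σ²+δ²), σ̂ = σ/√(σ²+δ²). Then the differential entropy of p_z satisfies the lower bound H(p_z) ≥ (1/2)(1 + ln(2π)) − (1/2) ln(1 + r²). -/

import Mathlib

/-!
Since `t ↦ -t log t` is concave, the entropy of a mixture is at least the average entropy of its
components. Both components of `p_z` are Gaussians of variance `σ̂² = 1 / (1 + r²)`, whose entropy
is `(1 + log (2π σ̂²)) / 2`, and this is the claimed bound. Subadditivity of `-t log t` bounds the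
mixture's integrand from the other side, so that its entropy integral is not a junk value.
-/

open Real MeasureTheory

/-- The univariate Gaussian density `N(v; μ, σ) = (1/(σ√(2π))) exp(−(v−μ)²/(2σ²))`. -/
noncomputable def gauss (μ σ : ℝ) (v : ℝ) : ℝ :=
  (1 / (σ * Real.sqrt (2 * π))) * Real.exp (-((v - μ) ^ 2) / (2 * σ ^ 2))

/-- The differential entropy `H(p) = −∫ p(v) ln p(v) dv` of a density on ℝ. -/
noncomputable def diffEntropy (p : ℝ → ℝ) : ℝ :=
  -∫ v : ℝ, p v * Real.log (p v)

open ProbabilityTheory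
open scoped NNReal

lemma Real.negMulLog_add_le {x y : ℝ} (hx : 0 ≤ x) (hy : 0 ≤ y) :
    negMulLog (x + y) ≤ negMulLog x + negMulLog y := by
  have mul_log_le_mul_log_add : ∀ {x y : ℝ}, 0 ≤ x → 0 ≤ y → x * log x ≤ x * log (x + y) := by
    intro x y hx hy
    rcases hx.eq_or_lt with rfl | hx
    · simp
    · exact mul_le_mul_of_nonneg_left (log_le_log hx (by linarith)) hx.le
  have hxy := mul_log_le_mul_log_add hx hy
  have hyx := mul_log_le_mul_log_add hy hx
  rw [add_comm y x] at hyx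
  simp only [negMulLog_eq_neg]
  linarith [add_mul x y (log (x + y))]

section Mixture

variable {α : Type*} [MeasurableSpace α] {μ : Measure α} {f g : α → ℝ} {a b : ℝ}

lemma integrable_negMulLog_mix (ha : 0 ≤ a) (hb : 0 ≤ b) (hab : a + b = 1)
    (hf₀ : 0 ≤ f) (hg₀ : 0 ≤ g) (hf : Integrable f μ) (hg : Integrable g μ)
    (hfH : Integrable (fun x ↦ negMulLog (f x)) μ) (hgH : Integrable (fun x ↦ negMulLog (g x)) μ) :
    Integrable (fun x ↦ negMulLog (a * f x + b * g x)) μ := by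
  refine integrable_of_le_of_le
    (continuous_negMulLog.comp_aestronglyMeasurable
      ((hf.const_mul a).add (hg.const_mul b)).aestronglyMeasurable)
    (ae_of_all _ fun x ↦ ?_) (ae_of_all _ fun x ↦ ?_)
    ((hfH.const_mul a).add (hgH.const_mul b))
    (((hf.mul_const (negMulLog a)).add (hfH.const_mul a)).add
      ((hg.mul_const (negMulLog b)).add (hgH.const_mul b)))
  · have := concaveOn_negMulLog.2 (Set.mem_Ici.2 (hf₀ x)) (Set.mem_Ici.2 (hg₀ x)) ha hb hab
    simpa only [Pi.add_apply, smul_eq_mul] using this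
  · have := negMulLog_add_le (mul_nonneg ha (hf₀ x)) (mul_nonneg hb (hg₀ x))
    simp only [negMulLog_mul] at this
    simpa only [Pi.add_apply] using this

end Mixture

lemma diffEntropy_eq_integral_negMulLog (p : ℝ → ℝ) :
    diffEntropy p = ∫ v, negMulLog (p v) := by
  simp only [diffEntropy, negMulLog_eq_neg, integral_neg]

lemma le_diffEntropy_mix {f g : ℝ → ℝ} {a b : ℝ} (ha : 0 ≤ a) (hb : 0 ≤ b) (hab : a + b = 1)
    (hf₀ : 0 ≤ f) (hg₀ : 0 ≤ g) (hf : Integrable f) (hg : Integrable g)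
    (hfH : Integrable (fun v ↦ negMulLog (f v))) (hgH : Integrable (fun v ↦ negMulLog (g v))) :
    a * diffEntropy f + b * diffEntropy g ≤ diffEntropy (fun v ↦ a * f v + b * g v) := by
  simp only [diffEntropy_eq_integral_negMulLog]
  rw [← integral_const_mul, ← integral_const_mul,
    ← integral_add (hfH.const_mul a) (hgH.const_mul b)]
  refine integral_mono ((hfH.const_mul a).add (hgH.const_mul b))
    (integrable_negMulLog_mix ha hb hab hf₀ hg₀ hf hg hfH hgH) fun v ↦ ?_
  simpa only [smul_eq_mul] using
    concaveOn_negMulLog.2 (Set.mem_Ici.2 (hf₀ v)) (Set.mem_Ici.2 (hg₀ v)) ha hb hab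

namespace ProbabilityTheory

variable {μ : ℝ} {v : ℝ≥0}

lemma log_gaussianPDFReal (hv : v ≠ 0) (x : ℝ) :
    log (gaussianPDFReal μ v x) = -log (2 * π * v) / 2 - (x - μ) ^ 2 / (2 * v) := by
  have : (0 : ℝ) < 2 * π * v := by positivity
  rw [gaussianPDFReal, log_mul (by positivity) (exp_ne_zero _), log_exp, log_inv, log_sqrt this.le]
  ring

lemma integral_gaussianPDFReal_mul_sq_sub (hv : v ≠ 0) :
    ∫ x, gaussianPDFReal μ v x * (x - μ) ^ 2 = v := by
  have hvar := variance_fun_id_gaussianReal (μ := μ) (v := v)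
  rw [variance_eq_integral measurable_id'.aemeasurable, integral_id_gaussianReal,
    integral_gaussianReal_eq_integral_smul hv] at hvar
  simpa only [smul_eq_mul] using hvar

lemma integrable_gaussianPDFReal_mul_sq_sub (hv : v ≠ 0) :
    Integrable (fun x ↦ gaussianPDFReal μ v x * (x - μ) ^ 2) :=
  .of_integral_ne_zero (by rw [integral_gaussianPDFReal_mul_sq_sub hv]; exact_mod_cast hv)

lemma negMulLog_gaussianPDFReal (hv : v ≠ 0) (x : ℝ) :
    negMulLog (gaussianPDFReal μ v x) = log (2 * π * v) / 2 * gaussianPDFReal μ v x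
      + (2 * (v : ℝ))⁻¹ * (gaussianPDFReal μ v x * (x - μ) ^ 2) := by
  rw [negMulLog, log_gaussianPDFReal hv]
  ring

lemma integrable_negMulLog_gaussianPDFReal (hv : v ≠ 0) :
    Integrable (fun x ↦ negMulLog (gaussianPDFReal μ v x)) := by
  simp only [negMulLog_gaussianPDFReal hv]
  exact ((integrable_gaussianPDFReal μ v).const_mul _).add
    ((integrable_gaussianPDFReal_mul_sq_sub hv).const_mul _)

lemma diffEntropy_gaussianPDFReal (hv : v ≠ 0) :
    diffEntropy (gaussianPDFReal μ v) = (1 + log (2 * π * v)) / 2 := by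
  rw [diffEntropy_eq_integral_negMulLog]
  simp only [negMulLog_gaussianPDFReal hv]
  rw [integral_add ((integrable_gaussianPDFReal μ v).const_mul _)
      ((integrable_gaussianPDFReal_mul_sq_sub hv).const_mul _),
    integral_const_mul, integral_const_mul, integral_gaussianPDFReal_eq_one μ hv,
    integral_gaussianPDFReal_mul_sq_sub hv]
  field_simp
  ring

end ProbabilityTheory

lemma gauss_eq_gaussianPDFReal {σ : ℝ} (hσ : 0 ≤ σ) (μ : ℝ) :
    gauss μ σ = gaussianPDFReal μ (σ ^ 2).toNNReal := by
  ext x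
  rw [gauss, gaussianPDFReal, Real.coe_toNNReal _ (sq_nonneg σ), sqrt_mul' _ (sq_nonneg σ),
    sqrt_sq hσ, neg_div]
  ring

lemma sq_div_sqrt_sq_add_sq {σ δ : ℝ} (hσ : 0 < σ) :
    (σ / √(σ ^ 2 + δ ^ 2)) ^ 2 = (1 + (δ / σ) ^ 2)⁻¹ := by
  rw [div_pow, sq_sqrt (by positivity)]
  field_simp

theorem diffEntropy_standardized_mixture_lower_general (σ δ : ℝ) (hσ : 0 < σ)
    (r δhat σhat : ℝ) (hr : r = δ / σ)
    (hσhat : σhat = σ / Real.sqrt (σ ^ 2 + δ ^ 2)) :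
    diffEntropy (fun v => (gauss (-δhat) σhat v + gauss δhat σhat v) / 2) ≥
      (1 / 2) * (1 + Real.log (2 * π)) - (1 / 2) * Real.log (1 + r ^ 2) := by
  have hσhat_pos : 0 < σhat := hσhat ▸ by positivity
  have hσhat_sq : σhat ^ 2 = (1 + r ^ 2)⁻¹ := hσhat ▸ hr ▸ sq_div_sqrt_sq_add_sq hσ
  set V := (σhat ^ 2).toNNReal
  have hV : V ≠ 0 := by simpa [V] using hσhat_pos.ne'
  have hV_eq : (V : ℝ) = (1 + r ^ 2)⁻¹ := by rw [Real.coe_toNNReal _ (sq_nonneg σhat), hσhat_sq]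
  calc (1 / 2) * (1 + log (2 * π)) - (1 / 2) * log (1 + r ^ 2)
      = 1 / 2 * diffEntropy (gaussianPDFReal (-δhat) V)
          + 1 / 2 * diffEntropy (gaussianPDFReal δhat V) := by
        rw [diffEntropy_gaussianPDFReal hV, diffEntropy_gaussianPDFReal hV, hV_eq,
          log_mul two_pi_pos.ne' (by positivity), log_inv]
        ring
    _ ≤ diffEntropy (fun v ↦ 1 / 2 * gaussianPDFReal (-δhat) V v
          + 1 / 2 * gaussianPDFReal δhat V v) :=
        le_diffEntropy_mix (by norm_num) (by norm_num) (by norm_num)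
          (fun _ ↦ gaussianPDFReal_nonneg _ V _) (fun _ ↦ gaussianPDFReal_nonneg _ V _)
          (integrable_gaussianPDFReal _ V) (integrable_gaussianPDFReal _ V)
          (integrable_negMulLog_gaussianPDFReal hV) (integrable_negMulLog_gaussianPDFReal hV)
    _ = diffEntropy (fun v ↦ (gauss (-δhat) σhat v + gauss δhat σhat v) / 2) := by
        simp only [gauss_eq_gaussianPDFReal hσhat_pos.le]
        congr 1
        ext v
        ring

/-- lower bound on the differential entropy of the standardized
two-component Gaussian mixture `p_z(v) = (N(v;−δ̂,σ̂) + N(v;δ̂,σ̂))/2`: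
`H(p_z) ≥ (1/2)(1 + ln(2π)) − (1/2) ln(1 + r²)` where `r = δ/σ`. -/
theorem diffEntropy_standardized_mixture_lower (σ δ : ℝ) (hσ : 0 < σ) (hδ : 0 < δ)
    (r δhat σhat : ℝ) (hr : r = δ / σ)
    (hδhat : δhat = δ / Real.sqrt (σ ^ 2 + δ ^ 2))
    (hσhat : σhat = σ / Real.sqrt (σ ^ 2 + δ ^ 2)) :
    diffEntropy (fun v => (gauss (-δhat) σhat v + gauss δhat σhat v) / 2) ≥
      (1 / 2) * (1 + Real.log (2 * π)) - (1 / 2) * Real.log (1 + r ^ 2) :=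
  diffEntropy_standardized_mixture_lower_general σ δ hσ r δhat σhat hr hσhat
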